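/- Let A_1, ..., A_m be positive definite real symmetric n×n matrices, let x ∈ ℝ^m be entrywise nonnegative, and let B be a positive definite real symmetric n×n matrix. Set M = Σ_{i=1}^m tr(A_i B) A_i, S = B # M^{-1} = B^{1/2} (B^{-1/2} M^{-1} B^{-1/2})^{1/2} B^{1/2}, and B' = S (Σ_{i=1}^m x_i A_i) S. Then Σ_{i=1}^m (x_i − tr(A_i B'))^2 ≤ Σ_{i=1}^m (x_i − tr(A_i B))^2. (Monotonicity of the squared loss under the SCMU/matrix multiplicative update, specialized to the positive semidefinite cone.) -/

import Mathlib

/-!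
Write `c i = tr (A i * B)` and `P i j = tr (A i * S * A j * S)`. Then `tr (A i * B') = (P x) i`,
and `S * M * S = B` (the defining property of `B # M⁻¹`) says `P c = c`, so
`x - P x = (I - P) (x - c)`. The matrix `P` is positive semidefinite (`yᵀ P y = tr (X S X S)` with
`X = ∑ y j • A j`), entrywise nonnegative, and has the positive eigenvector `c` with eigenvalue `1`,
so the Schur test gives `P ≤ I`. From `0 ≤ P ≤ I` we get `‖(I - P) w‖ ≤ ‖w‖`.
-/

open Matrix BigOperators

/- `msqrt A` is the positive semidefinite square root of `A` (junk value `0` when `A` is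
not positive semidefinite). -/
open Classical in
noncomputable def msqrt {n : ℕ} (A : Matrix (Fin n) (Fin n) ℝ) : Matrix (Fin n) (Fin n) ℝ :=
  if h : A.PosSemidef then
    (h.1.eigenvectorUnitary : Matrix (Fin n) (Fin n) ℝ) *
      diagonal ((↑) ∘ Real.sqrt ∘ h.1.eigenvalues) *
      (star h.1.eigenvectorUnitary : Matrix (Fin n) (Fin n) ℝ)
  else 0

/- The matrix geometric mean `X # Y = X^{1/2} (X^{-1/2} Y X^{-1/2})^{1/2} X^{1/2}`. -/
noncomputable def gmean {n : ℕ} (X Y : Matrix (Fin n) (Fin n) ℝ) : Matrix (Fin n) (Fin n) ℝ :=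
  msqrt X * msqrt (msqrt X⁻¹ * Y * msqrt X⁻¹) * msqrt X

open scoped MatrixOrder ComplexOrder

namespace Matrix
variable {n 𝕜 : Type*} [Fintype n] [DecidableEq n] [RCLike 𝕜] {X Y : Matrix n n 𝕜}

lemma PosSemidef.trace_mul_nonneg (hX : X.PosSemidef) (hY : Y.PosSemidef) :
    0 ≤ (X * Y).trace := by
  set R := CFC.sqrt Y
  have hR : Rᴴ = R := (CFC.sqrt_nonneg Y).posSemidef.isHermitian.eq
  have hRR : R * R = Y := CFC.sqrt_mul_sqrt_self Y hY.nonneg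
  rw [← hRR, ← Matrix.mul_assoc, trace_mul_cycle]
  nth_rw 1 [← hR]
  exact (hX.conjTranspose_mul_mul_same R).trace_nonneg

lemma PosDef.trace_mul_pos [Nonempty n] (hX : X.PosDef) (hY : Y.PosDef) :
    0 < (X * Y).trace := by
  set R := CFC.sqrt Y
  have hR : star R = R := (CFC.sqrt_nonneg Y).posSemidef.isHermitian.eq
  have hRR : R * R = Y := CFC.sqrt_mul_sqrt_self Y hY.posSemidef.nonneg
  have hRu : IsUnit R := CFC.isUnit_sqrt_iff_isStrictlyPositive.mpr hY.isStrictlyPositive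
  rw [← hRR, ← Matrix.mul_assoc, trace_mul_cycle]
  nth_rw 1 [← hR]
  exact ((Matrix.IsUnit.posDef_star_left_conjugate_iff hRu).mpr hX).trace_pos

end Matrix

section msqrt
variable {n : ℕ}

lemma msqrt_eq_cfcSqrt {A : Matrix (Fin n) (Fin n) ℝ} (hA : A.PosSemidef) :
    msqrt A = CFC.sqrt A := by
  rw [CFC.sqrt_eq_real_sqrt A hA.nonneg, cfcₙ_eq_cfc, hA.1.cfc_eq, msqrt, dif_pos hA]
  simp only [IsHermitian.cfc, RCLike.ofReal_real_eq_id, CompTriple.comp_eq,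
    Unitary.conjStarAlgAut_apply]
  rfl

lemma posSemidef_msqrt (A : Matrix (Fin n) (Fin n) ℝ) : (msqrt A).PosSemidef := by
  by_cases hA : A.PosSemidef
  · exact msqrt_eq_cfcSqrt hA ▸ (CFC.sqrt_nonneg A).posSemidef
  · simpa [msqrt, hA] using PosSemidef.zero

lemma posSemidef_gmean (X Y : Matrix (Fin n) (Fin n) ℝ) : (gmean X Y).PosSemidef := by
  have h := (posSemidef_msqrt (msqrt X⁻¹ * Y * msqrt X⁻¹)).conjTranspose_mul_mul_same (msqrt X)
  rwa [(posSemidef_msqrt X).isHermitian.eq] at h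

lemma gmean_inv_mul_mul_gmean_inv {B M : Matrix (Fin n) (Fin n) ℝ} (hB : B.PosDef)
    (hM : M.PosDef) : gmean B M⁻¹ * M * gmean B M⁻¹ = B := by
  set Q := CFC.sqrt B
  have hQ : IsUnit Q.det :=
    (isUnit_iff_isUnit_det Q).mp (CFC.isUnit_sqrt_iff_isStrictlyPositive.mpr hB.isStrictlyPositive)
  have hQinv : msqrt B⁻¹ = Q⁻¹ := by
    rw [msqrt_eq_cfcSqrt hB.inv.posSemidef, hB.posSemidef.inv_sqrt]
  have hconj : (Q⁻¹ * M⁻¹ * Q⁻¹).PosSemidef := by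
    have h := hM.inv.posSemidef.conjTranspose_mul_mul_same (msqrt B⁻¹)
    rwa [(posSemidef_msqrt B⁻¹).isHermitian.eq, hQinv] at h
  set T := CFC.sqrt (Q⁻¹ * M⁻¹ * Q⁻¹)
  have hgmean : gmean B M⁻¹ = Q * T * Q := by
    rw [gmean, hQinv, msqrt_eq_cfcSqrt hconj, msqrt_eq_cfcSqrt hB.posSemidef]
  have hTT : T * T = Q⁻¹ * M⁻¹ * Q⁻¹ := CFC.sqrt_mul_sqrt_self _ hconj.nonneg
  have hT : T * (Q * M * Q) * T = 1 := by
    refine mul_eq_one_comm.mp ?_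
    rw [← Matrix.mul_assoc, hTT]
    have hM' : IsUnit M.det := (isUnit_iff_isUnit_det M).mp hM.isUnit
    simp only [Matrix.mul_assoc, nonsing_inv_mul_cancel_left _ _ hQ,
      nonsing_inv_mul_cancel_left _ _ hM', nonsing_inv_mul _ hQ]
  calc gmean B M⁻¹ * M * gmean B M⁻¹ = Q * (T * (Q * M * Q) * T) * Q := by
        simp only [hgmean, Matrix.mul_assoc]
    _ = B := by rw [hT, Matrix.mul_one, CFC.sqrt_mul_sqrt_self B hB.posSemidef.nonneg]

end msqrt

namespace Matrix
variable {ι : Type*} [Fintype ι] {P : Matrix ι ι ℝ}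

/-- With `v = c * y`, `∑ i j, P i j c i c j (y i - y j)² = 2 (v ⬝ᵥ v - v ⬝ᵥ P v)`. -/
lemma dotProduct_mulVec_le_dotProduct_self_of_mulVec_eq {c : ι → ℝ} (hsymm : P.IsSymm)
    (hnonneg : ∀ i j, 0 ≤ P i j) (hc : ∀ i, 0 < c i) (hPc : P *ᵥ c = c) (v : ι → ℝ) :
    v ⬝ᵥ (P *ᵥ v) ≤ v ⬝ᵥ v := by
  set y : ι → ℝ := fun i => v i / c i
  have hv : ∀ i, v i = c i * y i := fun i => by simp only [y]; field_simp [(hc i).ne']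
  have hrow : ∀ i, ∑ j, P i j * c j = c i := fun i => congrFun hPc i
  have hdiag : ∑ i, ∑ j, P i j * c i * c j * y i ^ 2 = v ⬝ᵥ v := by
    calc ∑ i, ∑ j, P i j * c i * c j * y i ^ 2 = ∑ i, c i * y i ^ 2 * ∑ j, P i j * c j := by
          simp only [Finset.mul_sum]
          exact Finset.sum_congr rfl fun i _ => Finset.sum_congr rfl fun j _ => by ring
      _ = v ⬝ᵥ v := by
          simp only [hrow, dotProduct, hv]
          exact Finset.sum_congr rfl fun i _ => by ring
  have hdiag' : ∑ i, ∑ j, P i j * c i * c j * y j ^ 2 = v ⬝ᵥ v := by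
    rw [Finset.sum_comm, ← hdiag]
    refine Finset.sum_congr rfl fun i _ => Finset.sum_congr rfl fun j _ => ?_
    rw [hsymm.apply]; ring
  have hcross : ∑ i, ∑ j, P i j * c i * c j * (y i * y j) = v ⬝ᵥ (P *ᵥ v) := by
    simp only [dotProduct, mulVec, Finset.mul_sum, hv]
    refine Finset.sum_congr rfl fun i _ => Finset.sum_congr rfl fun j _ => by ring
  have hsq : 0 ≤ ∑ i, ∑ j, P i j * c i * c j * (y i - y j) ^ 2 :=
    Finset.sum_nonneg fun i _ => Finset.sum_nonneg fun j _ =>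
      mul_nonneg (mul_nonneg (mul_nonneg (hnonneg i j) (hc i).le) (hc j).le) (sq_nonneg _)
  have hexpand : ∑ i, ∑ j, P i j * c i * c j * (y i - y j) ^ 2 =
      ∑ i, ∑ j, P i j * c i * c j * y i ^ 2 + ∑ i, ∑ j, P i j * c i * c j * y j ^ 2
        - 2 * ∑ i, ∑ j, P i j * c i * c j * (y i * y j) := by
    simp only [Finset.mul_sum, ← Finset.sum_add_distrib, ← Finset.sum_sub_distrib]
    refine Finset.sum_congr rfl fun i _ => Finset.sum_congr rfl fun j _ => by ring
  linarith

/-- With `u = P w`, positivity of `P` at `w - u` and `u ⬝ᵥ P u ≤ u ⬝ᵥ u` give `u ⬝ᵥ u ≤ w ⬝ᵥ u`. -/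
lemma dotProduct_self_sub_mulVec_le (hP : P.PosSemidef)
    (hle : ∀ v, v ⬝ᵥ (P *ᵥ v) ≤ v ⬝ᵥ v) (w : ι → ℝ) :
    (w - P *ᵥ w) ⬝ᵥ (w - P *ᵥ w) ≤ w ⬝ᵥ w := by
  set u := P *ᵥ w
  have hPt : Pᵀ = P := hP.isHermitian.eq
  have hwPu : w ⬝ᵥ (P *ᵥ u) = u ⬝ᵥ u := by
    rw [dotProduct_mulVec, ← mulVec_transpose, hPt, dotProduct_comm]
  have h1 := hP.dotProduct_mulVec_nonneg (w - u)
  have h2 := hP.dotProduct_mulVec_nonneg w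
  have h3 := hle u
  simp only [star_trivial, mulVec_sub, sub_dotProduct, dotProduct_sub, hwPu] at h1 h2 ⊢
  rw [dotProduct_comm u w] at *
  linarith

end Matrix

section traceKernel
variable {ι n : Type*} [Fintype n]

def traceKernel (A : ι → Matrix n n ℝ) (S : Matrix n n ℝ) : Matrix ι ι ℝ :=
  of fun i j => trace (A i * S * A j * S)

variable {A : ι → Matrix n n ℝ} {S : Matrix n n ℝ}

lemma dotProduct_trace_mul [Fintype ι] (A : ι → Matrix n n ℝ) (T : Matrix n n ℝ) (y : ι → ℝ) :
    y ⬝ᵥ (fun i => trace (A i * T)) = trace ((∑ i, y i • A i) * T) := by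
  simp only [dotProduct, Matrix.sum_mul, trace_sum, smul_mul, trace_smul, smul_eq_mul]

lemma traceKernel_mulVec [Fintype ι] (A : ι → Matrix n n ℝ) (S : Matrix n n ℝ) (y : ι → ℝ) :
    traceKernel A S *ᵥ y = fun i => trace (A i * (S * (∑ j, y j • A j) * S)) := by
  ext i
  simp only [mulVec, dotProduct, traceKernel, of_apply, Matrix.mul_sum, Matrix.sum_mul,
    trace_sum, Matrix.mul_smul, Matrix.smul_mul, trace_smul, smul_eq_mul, Matrix.mul_assoc]
  exact Finset.sum_congr rfl fun j _ => mul_comm _ _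

lemma traceKernel_isSymm (A : ι → Matrix n n ℝ) (S : Matrix n n ℝ) :
    (traceKernel A S).IsSymm :=
  IsSymm.ext fun i j => by
    simp only [traceKernel, of_apply]
    rw [Matrix.mul_assoc (A j * S), trace_mul_comm, ← Matrix.mul_assoc]

lemma traceKernel_nonneg [DecidableEq n] (hA : ∀ i, (A i).PosSemidef) (hS : S.PosSemidef)
    (i j : ι) : 0 ≤ traceKernel A S i j := by
  have h := (hA j).conjTranspose_mul_mul_same S
  rw [hS.isHermitian.eq] at h
  simpa only [traceKernel, of_apply, Matrix.mul_assoc] using (hA i).trace_mul_nonneg h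

lemma posSemidef_traceKernel [Fintype ι] [DecidableEq n] (hA : ∀ i, (A i).IsHermitian)
    (hS : S.PosSemidef) : (traceKernel A S).PosSemidef := by
  refine posSemidef_iff_dotProduct_mulVec.mpr ⟨?_, fun y => ?_⟩
  · rw [IsHermitian, conjTranspose_eq_transpose_of_trivial]
    exact traceKernel_isSymm A S
  · set X := ∑ j, y j • A j
    have hX : X.IsHermitian :=
      isSelfAdjoint_sum _ fun j _ => (IsSelfAdjoint.all (y j)).smul (hA j)
    have h := hS.conjTranspose_mul_mul_same X
    rw [hX.eq] at h
    rw [star_trivial, traceKernel_mulVec, dotProduct_trace_mul]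
    simpa only [Matrix.mul_assoc] using h.trace_mul_nonneg hS

end traceKernel

theorem stmt11_general {n m : ℕ} (A : Fin m → Matrix (Fin n) (Fin n) ℝ)
    (hA : ∀ i, (A i).PosDef)
    (x : Fin m → ℝ)
    (B : Matrix (Fin n) (Fin n) ℝ) (hB : B.PosDef)
    (M S B' : Matrix (Fin n) (Fin n) ℝ)
    (hM : M = ∑ i, (Matrix.trace (A i * B)) • A i)
    (hS : S = gmean B M⁻¹)
    (hB' : B' = S * (∑ i, x i • A i) * S) :
    ∑ i, (x i - Matrix.trace (A i * B')) ^ 2 ≤ ∑ i, (x i - Matrix.trace (A i * B)) ^ 2 := by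
  rcases isEmpty_or_nonempty (Fin n) with hn | hn
  · simp [Matrix.trace]
  rcases isEmpty_or_nonempty (Fin m) with hm | hm
  · simp
  set c : Fin m → ℝ := fun i => trace (A i * B)
  have hc : ∀ i, 0 < c i := fun i => (hA i).trace_mul_pos hB
  have hMpd : M.PosDef := hM ▸ posDef_sum Finset.univ_nonempty fun i _ => (hA i).smul (hc i)
  have hSMS : S * M * S = B := hS ▸ gmean_inv_mul_mul_gmean_inv hB hMpd
  have hSpsd : S.PosSemidef := hS ▸ posSemidef_gmean B M⁻¹
  set P := traceKernel A S
  have hPc : P *ᵥ c = c := by rw [traceKernel_mulVec, ← hM, hSMS]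
  have hPx : (fun i => trace (A i * B')) = P *ᵥ x := by rw [traceKernel_mulVec, hB']
  have hle := dotProduct_mulVec_le_dotProduct_self_of_mulVec_eq (traceKernel_isSymm A S)
    (traceKernel_nonneg (fun i => (hA i).posSemidef) hSpsd) hc hPc
  have hcontract := dotProduct_self_sub_mulVec_le
    (posSemidef_traceKernel (fun i => (hA i).isHermitian) hSpsd) hle (x - c)
  have hres : x - P *ᵥ x = (x - c) - P *ᵥ (x - c) := by rw [mulVec_sub, hPc]; abel
  calc ∑ i, (x i - trace (A i * B')) ^ 2 = ∑ i, ((x - c) - P *ᵥ (x - c)) i ^ 2 := by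
        rw [← hres, ← hPx]; rfl
    _ ≤ ∑ i, (x - c) i ^ 2 := by simpa only [dotProduct, sq] using hcontract

theorem stmt11 {n m : ℕ} (A : Fin m → Matrix (Fin n) (Fin n) ℝ)
    (hA : ∀ i, (A i).PosDef)
    (x : Fin m → ℝ) (hx : ∀ i, 0 ≤ x i)
    (B : Matrix (Fin n) (Fin n) ℝ) (hB : B.PosDef)
    (M S B' : Matrix (Fin n) (Fin n) ℝ)
    (hM : M = ∑ i, (Matrix.trace (A i * B)) • A i)
    (hS : S = gmean B M⁻¹)
    (hB' : B' = S * (∑ i, x i • A i) * S) :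
    ∑ i, (x i - Matrix.trace (A i * B')) ^ 2 ≤ ∑ i, (x i - Matrix.trace (A i * B)) ^ 2 :=
  stmt11_general A hA x B hB M S B' hM hS hB'
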